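/- arXiv:1211.0130 — 4 statements merged into one kernel-verified Lean document; each statement's English description precedes it below -/
import Mathlib

section
/- Fix σ > 0 and α < 0. As ρ → 0+ (with θ = ρ/σ), the FTG density f(x;α,θ,ρ) = ρ^α σ^{-1}(1+x/σ)^{α-1} exp(-ρ(1+x/σ))/Γ(α,ρ) converges pointwise on (0,∞) to the Pareto density p(x;α,σ) = -α σ^{-1}(1+x/σ)^{α-1}. -/
open MeasureTheory Real Filter Set

noncomputable def uGamma (a r : ℝ) : ℝ := ∫ t in Set.Ioi r, t ^ (a - 1) * Real.exp (-t)

noncomputable def ftg (a θ ρ x : ℝ) : ℝ :=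
  θ * (ρ + θ * x) ^ (a - 1) * Real.exp (-(ρ + θ * x)) / uGamma a ρ

noncomputable def pareto (a σ x : ℝ) : ℝ := -a * σ⁻¹ * (1 + x / σ) ^ (a - 1)

/-! The substitution `t = ρ s` gives `Γ(α, ρ) = ρ^α E_{1-α}(ρ)`, where
`E_p(z) = ∫_1^∞ s^(-p) e^(-z s) ds` is the generalized exponential integral. For `p > 1` the
integrand is dominated by `s^(-p)`, so `E_p(z) → E_p(0) = 1 / (p - 1)` as `z → 0+`. The factor
`ρ^α` cancels against the prefactor of the FTG density, which becomes
`σ⁻¹ (1 + x/σ)^(α-1) e^(-ρ(1 + x/σ)) / E_{1-α}(ρ) → -α σ⁻¹ (1 + x/σ)^(α-1)`. -/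

open Topology

noncomputable def expIntegralE (p z : ℝ) : ℝ := ∫ t in Ioi 1, t ^ (-p) * exp (-(z * t))

theorem uGamma_eq_rpow_mul_expIntegralE (a : ℝ) {ρ : ℝ} (hρ : 0 < ρ) :
    uGamma a ρ = ρ ^ a * expIntegralE (1 - a) ρ := by
  have hsub := integral_comp_mul_left_Ioi' (fun t => t ^ (a - 1) * exp (-t)) 1 hρ
  rw [mul_one] at hsub
  rw [uGamma, ← hsub, expIntegralE, smul_eq_mul, ← integral_const_mul, ← integral_const_mul]
  refine setIntegral_congr_fun measurableSet_Ioi fun t (ht : 1 < t) => ?_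
  rw [mul_rpow hρ.le (by linarith), neg_sub, rpow_sub_one hρ.ne']
  field_simp

theorem expIntegralE_zero {p : ℝ} (hp : 1 < p) : expIntegralE p 0 = (p - 1)⁻¹ := by
  simp only [expIntegralE, zero_mul, neg_zero, exp_zero, mul_one]
  rw [integral_Ioi_rpow_of_lt (by linarith) zero_lt_one, one_rpow, neg_div, ← div_neg, one_div]
  ring_nf

theorem tendsto_expIntegralE_nhdsGT_zero {p : ℝ} (hp : 1 < p) :
    Tendsto (expIntegralE p) (𝓝[>] 0) (𝓝 (p - 1)⁻¹) := by
  rw [← expIntegralE_zero hp]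
  refine tendsto_integral_filter_of_dominated_convergence (fun t => t ^ (-p)) ?_ ?_
    (integrableOn_Ioi_rpow_of_lt (by linarith) zero_lt_one) ?_
  · refine Eventually.of_forall fun z => ContinuousOn.aestronglyMeasurable ?_ measurableSet_Ioi
    exact (continuousOn_id.rpow_const fun t (ht : 1 < t) => Or.inl (zero_lt_one.trans ht).ne').mul
      (by fun_prop)
  · filter_upwards [self_mem_nhdsWithin] with z (hz : 0 < z)
    filter_upwards [ae_restrict_mem measurableSet_Ioi] with t (ht : 1 < t)
    rw [norm_mul, norm_of_nonneg (by positivity), norm_of_nonneg (by positivity)]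
    exact mul_le_of_le_one_right (by positivity) (exp_le_one_iff.mpr (by nlinarith))
  · refine Eventually.of_forall fun t => tendsto_nhdsWithin_of_tendsto_nhds ?_
    exact (continuous_const.mul (continuous_id.mul continuous_const).neg.rexp).tendsto 0

theorem ftg_eq_div_expIntegralE (a : ℝ) {σ ρ x : ℝ} (hσ : σ ≠ 0) (hρ : 0 < ρ)
    (hx : 0 ≤ 1 + x / σ) :
    ftg a (ρ / σ) ρ x =
      σ⁻¹ * (1 + x / σ) ^ (a - 1) * exp (-(ρ * (1 + x / σ))) / expIntegralE (1 - a) ρ := by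
  have hρx : ρ + ρ / σ * x = ρ * (1 + x / σ) := by field_simp
  rw [ftg, hρx, uGamma_eq_rpow_mul_expIntegralE a hρ, mul_rpow hρ.le hx, rpow_sub_one hρ.ne',
    mul_div_mul_comm]
  field_simp

theorem ftg_tendsto_pareto_pointwise (σ α : ℝ) (hσ : 0 < σ) (hα : α < 0) :
    ∀ x ∈ Set.Ioi (0:ℝ),
      Filter.Tendsto (fun ρ : ℝ => ftg α (ρ / σ) ρ x)
        (nhdsWithin 0 (Set.Ioi 0)) (nhds (pareto α σ x)) := by
  intro x hx
  have hc : 0 ≤ 1 + x / σ := by have : 0 < x := hx; positivity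
  have hexp : Tendsto (fun ρ => exp (-(ρ * (1 + x / σ)))) (𝓝[>] 0) (𝓝 1) := by
    refine tendsto_nhdsWithin_of_tendsto_nhds ?_
    simpa using ((continuous_id.mul continuous_const).neg.rexp).tendsto (0 : ℝ)
  have hE := tendsto_expIntegralE_nhdsGT_zero (p := 1 - α) (by linarith)
  rw [sub_sub_cancel_left] at hE
  have hlim := ((tendsto_const_nhds (x := σ⁻¹ * (1 + x / σ) ^ (α - 1))).mul hexp).div hE
    (inv_ne_zero (neg_ne_zero.mpr hα.ne))
  have hpareto : σ⁻¹ * (1 + x / σ) ^ (α - 1) * 1 / (-α)⁻¹ = pareto α σ x := by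
    rw [pareto, div_inv_eq_mul]
    ring
  rw [← hpareto]
  exact hlim.congr' (eventually_nhdsWithin_of_forall fun ρ hρ =>
    (ftg_eq_div_expIntegralE α hσ.ne' hρ hc).symm)
end

section
/- Fix σ > 0 and α < 0. As ρ → 0+ (with θ = ρ/σ), the FTG density f(·;α,θ,ρ) converges to the Pareto density p(·;α,σ) in L¹((0,∞)) norm. -/
open MeasureTheory Real Filter Set

/-!
Substituting `t = ρ s` gives `Γ(α, ρ) = ρ ^ α * I(ρ)` with `I(ρ) = ∫_{s > 1} s ^ (α - 1) e^{-ρ s}`,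
and with `θ = ρ / σ` the density becomes `f(x) = p(x) e^{-ρ (1 + x / σ)} / (-α I(ρ))`.
For `α < 0`, `I(ρ) → ∫_{s > 1} s ^ (α - 1) = (-α)⁻¹` as `ρ → 0+`, so `f → p` pointwise and
eventually `f ≤ 2 p`; dominated convergence then gives convergence in `L¹`.
-/

open Topology

theorem tendsto_integral_norm_sub_of_dominated {ι X E : Type*} [MeasurableSpace X]
    [NormedAddCommGroup E] {μ : Measure X} {l : Filter ι} [l.IsCountablyGenerated]
    {F : ι → X → E} {f : X → E} (g : X → ℝ)
    (hF_meas : ∀ᶠ i in l, AEStronglyMeasurable (F i) μ)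
    (h_bound : ∀ᶠ i in l, ∀ᵐ x ∂μ, ‖F i x‖ ≤ g x) (hg : Integrable g μ)
    (hf : Integrable f μ)
    (h_lim : ∀ᵐ x ∂μ, Tendsto (F · x) l (𝓝 (f x))) :
    Tendsto (fun i => ∫ x, ‖F i x - f x‖ ∂μ) l (𝓝 0) := by
  have h_bound_sub :
      ∀ᶠ i in l, ∀ᵐ x ∂μ, ‖‖F i x - f x‖‖ ≤ g x + ‖f x‖ := by
    filter_upwards [h_bound] with i hi
    filter_upwards [hi] with x hx
    rw [norm_norm]
    exact (norm_sub_le _ _).trans (by gcongr)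
  have h_lim_sub : ∀ᵐ x ∂μ, Tendsto (fun i => ‖F i x - f x‖) l (𝓝 0) := by
    filter_upwards [h_lim] with x hx
    simpa using (hx.sub_const (f x)).norm
  simpa using tendsto_integral_filter_of_dominated_convergence _
    (hF_meas.mono fun i hi => (hi.sub hf.1).norm) h_bound_sub (hg.add hf.norm) h_lim_sub

noncomputable def scaledUGamma (α ρ : ℝ) : ℝ :=
  ∫ s in Ioi (1 : ℝ), s ^ (α - 1) * exp (-(ρ * s))

theorem uGamma_eq_rpow_mul_scaledUGamma (α : ℝ) {ρ : ℝ} (hρ : 0 < ρ) :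
    uGamma α ρ = ρ ^ α * scaledUGamma α ρ := by
  have hsub := integral_comp_mul_left_Ioi (fun t => t ^ (α - 1) * exp (-t)) 1 hρ
  rw [mul_one, smul_eq_mul, ← uGamma] at hsub
  have hscale :
      uGamma α ρ = ρ * ∫ s in Ioi (1 : ℝ), (ρ * s) ^ (α - 1) * exp (-(ρ * s)) := by
    rw [hsub, mul_inv_cancel_left₀ hρ.ne']
  rw [hscale, scaledUGamma, ← integral_const_mul, ← integral_const_mul]
  refine setIntegral_congr_fun measurableSet_Ioi fun s hs => ?_
  have hs0 : (0 : ℝ) ≤ s := zero_le_one.trans (le_of_lt hs)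
  rw [mul_rpow hρ.le hs0, rpow_sub_one hρ.ne']
  field_simp

theorem tendsto_scaledUGamma {α : ℝ} (hα : α < 0) :
    Tendsto (scaledUGamma α) (𝓝[>] 0) (𝓝 (-α)⁻¹) := by
  have hlim : ∫ s in Ioi (1 : ℝ), s ^ (α - 1) = (-α)⁻¹ := by
    rw [integral_Ioi_rpow_of_lt (by linarith) one_pos, one_rpow]
    field_simp
    ring
  rw [← hlim]
  refine tendsto_integral_filter_of_dominated_convergence (fun s => s ^ (α - 1))
    (Eventually.of_forall fun ρ => by fun_prop) ?_
    (integrableOn_Ioi_rpow_of_lt (by linarith) one_pos) ?_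
  · filter_upwards [self_mem_nhdsWithin] with ρ (hρ : 0 < ρ)
    filter_upwards [ae_restrict_mem measurableSet_Ioi] with s (hs : 1 < s)
    have hs0 : 0 ≤ s ^ (α - 1) := rpow_nonneg (by linarith) _
    rw [norm_of_nonneg (by positivity)]
    exact mul_le_of_le_one_right hs0 (exp_le_one_iff.mpr (by nlinarith))
  · refine Eventually.of_forall fun s => ?_
    have hcont : Continuous fun ρ : ℝ => s ^ (α - 1) * exp (-(ρ * s)) := by fun_prop
    simpa using hcont.continuousWithinAt.tendsto (x := 0) (s := Ioi 0)

theorem integrableOn_pareto {α σ : ℝ} (hα : α < 0) (hσ : 0 < σ) :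
    IntegrableOn (pareto α σ) (Ioi 0) := by
  have hshift : IntegrableOn (fun y : ℝ => (y + 1) ^ (α - 1)) (Ioi (σ⁻¹ * 0)) := by
    rw [mul_zero]
    exact integrableOn_add_rpow_Ioi_of_lt (by linarith) (by norm_num)
  have hscaled := (integrableOn_Ioi_comp_mul_left_iff _ 0 (inv_pos.mpr hσ)).mpr hshift
  refine IntegrableOn.congr_fun (hscaled.const_mul (-α * σ⁻¹)) (fun x _ => ?_)
    measurableSet_Ioi
  rw [pareto, inv_mul_eq_div, add_comm]

theorem pareto_nonneg {α σ x : ℝ} (hα : α ≤ 0) (hσ : 0 ≤ σ) (hx : 0 ≤ x) :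
    0 ≤ pareto α σ x := by
  unfold pareto
  have : 0 ≤ -α := neg_nonneg.mpr hα
  positivity

theorem ftg_div_eq_pareto_mul {α σ ρ x : ℝ} (hα : α ≠ 0) (hσ : 0 < σ) (hρ : 0 < ρ)
    (hx : 0 ≤ x) :
    ftg α (ρ / σ) ρ x
      = pareto α σ x * exp (-(ρ * (1 + x / σ))) / (-α * scaledUGamma α ρ) := by
  have hsum : ρ + ρ / σ * x = ρ * (1 + x / σ) := by field_simp
  have hρα : ρ ^ α = ρ * ρ ^ (α - 1) := by
    rw [rpow_sub_one hρ.ne']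
    field_simp
  rw [ftg, pareto, hsum, mul_rpow hρ.le (by positivity), uGamma_eq_rpow_mul_scaledUGamma α hρ,
    hρα]
  rcases eq_or_ne (scaledUGamma α ρ) 0 with h0 | h0
  · simp [h0]
  · field_simp

theorem tendsto_neg_mul_scaledUGamma {α : ℝ} (hα : α < 0) :
    Tendsto (fun ρ => -α * scaledUGamma α ρ) (𝓝[>] 0) (𝓝 1) := by
  have h := (tendsto_scaledUGamma hα).const_mul (-α)
  rwa [mul_inv_cancel₀ (neg_ne_zero.mpr hα.ne)] at h

theorem tendsto_ftg_div_pareto {α σ x : ℝ} (hα : α < 0) (hσ : 0 < σ) (hx : 0 ≤ x) :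
    Tendsto (fun ρ => ftg α (ρ / σ) ρ x) (𝓝[>] 0) (𝓝 (pareto α σ x)) := by
  have hexp : Tendsto (fun ρ : ℝ => exp (-(ρ * (1 + x / σ)))) (𝓝[>] 0) (𝓝 1) := by
    have hcont : Continuous fun ρ : ℝ => exp (-(ρ * (1 + x / σ))) := by fun_prop
    simpa using hcont.continuousWithinAt.tendsto (x := 0) (s := Ioi 0)
  have hlim := (tendsto_const_nhds (x := pareto α σ x)).mul hexp |>.div
    (tendsto_neg_mul_scaledUGamma hα) one_ne_zero
  rw [mul_one, div_one] at hlim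
  refine hlim.congr' ?_
  filter_upwards [self_mem_nhdsWithin] with ρ (hρ : 0 < ρ)
  exact (ftg_div_eq_pareto_mul hα.ne hσ hρ hx).symm

theorem eventually_abs_ftg_div_le_two_mul_pareto {α σ : ℝ} (hα : α < 0) (hσ : 0 < σ) :
    ∀ᶠ ρ in 𝓝[>] 0, ∀ x, 0 ≤ x → |ftg α (ρ / σ) ρ x| ≤ 2 * pareto α σ x := by
  have hhalf := (tendsto_neg_mul_scaledUGamma hα).eventually_const_lt one_half_lt_one
  filter_upwards [self_mem_nhdsWithin, hhalf] with ρ (hρ : 0 < ρ) hden x hx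
  have hp := pareto_nonneg hα.le hσ.le hx
  rw [ftg_div_eq_pareto_mul hα.ne hσ hρ hx, abs_of_nonneg (by positivity),
    div_le_iff₀ (by linarith)]
  calc pareto α σ x * exp (-(ρ * (1 + x / σ))) ≤ pareto α σ x :=
        mul_le_of_le_one_right hp (exp_le_one_iff.mpr (by nlinarith [div_nonneg hx hσ.le]))
    _ ≤ 2 * pareto α σ x * (-α * scaledUGamma α ρ) := by nlinarith

theorem ftg_tendsto_pareto_L1 (σ α : ℝ) (hσ : 0 < σ) (hα : α < 0) :
    Filter.Tendsto (fun ρ : ℝ => ∫ x in Set.Ioi (0:ℝ), |ftg α (ρ / σ) ρ x - pareto α σ x|)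
      (nhdsWithin 0 (Set.Ioi 0)) (nhds 0) := by
  have hmeas :
      ∀ ρ, AEStronglyMeasurable (fun x => ftg α (ρ / σ) ρ x) (volume.restrict (Ioi 0)) :=
    fun ρ => by unfold ftg; fun_prop
  have hbound : ∀ᶠ ρ in 𝓝[>] 0, ∀ᵐ x ∂(volume.restrict (Ioi 0)),
      ‖ftg α (ρ / σ) ρ x‖ ≤ 2 * pareto α σ x := by
    filter_upwards [eventually_abs_ftg_div_le_two_mul_pareto hα hσ] with ρ hρ
    filter_upwards [ae_restrict_mem measurableSet_Ioi] with x (hx : 0 < x)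
    exact hρ x hx.le
  have hlim : ∀ᵐ x ∂(volume.restrict (Ioi 0)),
      Tendsto (fun ρ => ftg α (ρ / σ) ρ x) (𝓝[>] 0) (𝓝 (pareto α σ x)) := by
    filter_upwards [ae_restrict_mem measurableSet_Ioi] with x (hx : 0 < x)
    exact tendsto_ftg_div_pareto hα hσ hx.le
  have hpareto := integrableOn_pareto hα hσ
  simpa only [Real.norm_eq_abs] using tendsto_integral_norm_sub_of_dominated _
    (Eventually.of_forall hmeas) hbound (hpareto.const_mul 2) hpareto hlim
end

section
/- There exists ρ₀ > 0 such that for all 0 < ρ < ρ₀, ρ^α/Γ(α,ρ) ≤ -2α, where α < 0 is fixed. -/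
open MeasureTheory Real Filter Set

/-! Bounding `exp (-t)` below by `exp (-b)` on `(ρ, b]` gives
`Γ(α, ρ) ≥ exp (-b) (ρ^α - b^α) / (-α)`. For `b = log (3/2)` this reads
`-α Γ(α, ρ) ≥ (2/3)(ρ^α - b^α)`, and since `ρ^α → ∞` as `ρ → 0⁺`, eventually `ρ^α ≥ 4 b^α`,
whence `-2α Γ(α, ρ) ≥ (4/3)(ρ^α - b^α) ≥ ρ^α`. -/

open scoped Topology

lemma integrableOn_rpow_mul_exp_neg_Ioi (a : ℝ) {r : ℝ} (hr : 0 < r) :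
    IntegrableOn (fun t : ℝ => t ^ (a - 1) * exp (-t)) (Ioi r) := by
  refine integrable_of_isBigO_exp_neg one_half_pos ?_ ?_
  · exact (continuousOn_id.rpow_const fun t ht => Or.inl (hr.trans_le ht).ne').mul
      continuousOn_id.neg.rexp
  · simpa only [mul_comm] using (Real.Gamma_integrand_isLittleO (a - 1)).isBigO

lemma exp_neg_mul_rpow_sub_rpow_div_le_uGamma {a ρ b : ℝ} (ha : a ≠ 0) (hρ : 0 < ρ)
    (hρb : ρ ≤ b) : exp (-b) * ((ρ ^ a - b ^ a) / -a) ≤ uGamma a ρ := by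
  have h0 : (0 : ℝ) ∉ uIcc ρ b := notMem_uIcc_of_lt hρ (hρ.trans_le hρb)
  calc exp (-b) * ((ρ ^ a - b ^ a) / -a) = ∫ t in ρ..b, exp (-b) * t ^ (a - 1) := by
        rw [intervalIntegral.integral_const_mul, integral_rpow (Or.inr ⟨by simpa, h0⟩),
          sub_add_cancel, ← neg_div_neg_eq, neg_sub, neg_neg]
    _ ≤ ∫ t in Ioc ρ b, t ^ (a - 1) * exp (-t) := by
        rw [intervalIntegral.integral_of_le hρb]
        refine setIntegral_mono_on ?_ ((integrableOn_rpow_mul_exp_neg_Ioi a hρ).mono_set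
          Ioc_subset_Ioi_self) measurableSet_Ioc fun t ht => ?_
        · exact ((intervalIntegral.intervalIntegrable_rpow (Or.inr h0)).1).const_mul _
        · rw [mul_comm]
          have := (hρ.trans ht.1).le
          gcongr
          exact ht.2
    _ ≤ uGamma a ρ := by
        refine setIntegral_mono_set (integrableOn_rpow_mul_exp_neg_Ioi a hρ) ?_
          Ioc_subset_Ioi_self.eventuallyLE
        filter_upwards [ae_restrict_mem measurableSet_Ioi] with t ht
        have := hρ.trans ht
        positivity

theorem rpow_div_uGamma_bound (α : ℝ) (hα : α < 0) :
    ∃ ρ₀ > (0:ℝ), ∀ ρ : ℝ, 0 < ρ → ρ < ρ₀ → ρ ^ α / uGamma α ρ ≤ -2 * α := by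
  set b := log (3 / 2)
  have hb : 0 < b := log_pos (by norm_num)
  have hexp : exp (-b) = 2 / 3 := by rw [exp_neg, exp_log (by norm_num)]; norm_num
  have hbα : 0 < b ^ α := rpow_pos_of_pos hb α
  have hsmall : ∀ᶠ ρ in 𝓝[>] 0, 4 * b ^ α ≤ ρ ^ α ∧ ρ < b :=
    ((tendsto_rpow_neg_nhdsGT_zero hα).eventually_ge_atTop _).and
      (eventually_nhdsWithin_of_eventually_nhds (eventually_lt_nhds hb))
  obtain ⟨ρ₀, hρ₀, hsub⟩ := mem_nhdsGT_iff_exists_Ioo_subset.1 hsmall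
  refine ⟨ρ₀, hρ₀, fun ρ hρ hρρ₀ => ?_⟩
  obtain ⟨hlarge, hρb⟩ := hsub ⟨hρ, hρρ₀⟩
  have hlow : 2 / 3 * (ρ ^ α - b ^ α) ≤ -α * uGamma α ρ := by
    have := exp_neg_mul_rpow_sub_rpow_div_le_uGamma hα.ne hρ hρb.le
    rwa [hexp, mul_div_assoc', div_le_iff₀' (neg_pos.2 hα)] at this
  have hΓ : 0 < uGamma α ρ :=
    (pos_iff_pos_of_mul_pos (by linarith : 0 < -α * uGamma α ρ)).1 (neg_pos.2 hα)
  rw [div_le_iff₀ hΓ]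
  linarith
end

section
/- Fix σ > 0, α < 0, and k a positive integer with k < -α. As ρ → 0+ (with θ = ρ/σ), the k-th moment ∫_0^∞ x^k f(x;α,θ,ρ) dx of the FTG distribution converges to the k-th moment ∫_0^∞ x^k p(x;α,σ) dx of the Pareto distribution, the latter being finite. -/
/-! Writing `Γ(α, ρ) = ρ^α ∫₁^∞ s^(α-1) e^{-ρs} ds` and substituting `t = ρ (1 + x / σ)` in the
moment, the factors `ρ^α` cancel and the `k`-th FTG moment becomes
`(∫₀^∞ xᵏ (1 + x/σ)^(α-1) e^{-ρ(1+x/σ)} dx) / (σ ∫₁^∞ s^(α-1) e^{-ρs} ds)`.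
As `ρ → 0⁺` the damping factors `e^{-ρ(⋯)} ≤ 1` tend to `1`, so by dominated convergence the
quotient tends to `(∫₀^∞ xᵏ (1 + x/σ)^(α-1) dx) / (σ · (-1/α))`, the Pareto moment. The
dominating function is integrable because it decays like `x^(k+α-1)` with `k + α - 1 < -1`. -/

open MeasureTheory Real Filter Set

open Topology

theorem tendsto_integral_mul_exp_neg_mul {X : Type*} [MeasurableSpace X] {μ : Measure X}
    {g h : X → ℝ} (hg : Integrable g μ) (hh : AEMeasurable h μ) (h_nonneg : ∀ᵐ x ∂μ, 0 ≤ h x) :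
    Tendsto (fun ρ : ℝ => ∫ x, g x * exp (-(ρ * h x)) ∂μ) (𝓝[≥] 0) (𝓝 (∫ x, g x ∂μ)) := by
  refine tendsto_integral_filter_of_dominated_convergence (fun x => ‖g x‖) ?_ ?_ hg.norm ?_
  · exact .of_forall fun ρ =>
      hg.aestronglyMeasurable.mul ((hh.const_mul ρ).neg.exp).aestronglyMeasurable
  · filter_upwards [self_mem_nhdsWithin] with ρ (hρ : 0 ≤ ρ)
    filter_upwards [h_nonneg] with x hx
    rw [norm_mul, norm_of_nonneg (exp_pos _).le]
    exact mul_le_of_le_one_right (norm_nonneg _) (exp_le_one_iff.mpr (by nlinarith))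
  · refine .of_forall fun x => ?_
    have hcont : Continuous fun ρ : ℝ => g x * exp (-(ρ * h x)) := by fun_prop
    simpa using (hcont.tendsto 0).mono_left nhdsWithin_le_nhds

theorem integrableOn_pow_mul_one_add_div_rpow {σ α : ℝ} (hσ : 0 < σ) {k : ℕ}
    (hkα : (k : ℝ) < -α) :
    IntegrableOn (fun x : ℝ => x ^ k * (1 + x / σ) ^ (α - 1)) (Ioi 0) := by
  have h_dom : Integrable (fun x : ℝ => σ ^ k * (1 + ‖x / σ‖) ^ (-(1 - α - k))) := by
    refine ((integrable_one_add_norm ?_).comp_div hσ.ne').const_mul _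
    simp only [Module.finrank_self, Nat.cast_one]
    linarith
  refine h_dom.integrableOn.mono' (by fun_prop) ((ae_restrict_iff' measurableSet_Ioi).mpr ?_)
  refine .of_forall fun x (hx : 0 < x) => ?_
  have hxσ : 0 < x / σ := div_pos hx hσ
  have hx_eq : x ^ k = σ ^ k * (x / σ) ^ k := by rw [div_pow, mul_div_cancel₀ _ (by positivity)]
  rw [norm_of_nonneg (by positivity), norm_of_nonneg hxσ.le, hx_eq, mul_assoc,
    show -(1 - α - k) = (k : ℝ) + (α - 1) by ring, rpow_add (by positivity), rpow_natCast]
  gcongr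
  linarith

theorem integral_Ioi_one_rpow {α : ℝ} (hα : α < 0) :
    ∫ s in Ioi (1 : ℝ), s ^ (α - 1) = -1 / α := by
  rw [integral_Ioi_rpow_of_lt (by linarith) zero_lt_one, sub_add_cancel, one_rpow]

theorem uGamma_eq_rpow_mul_integral_Ioi_one (α : ℝ) {ρ : ℝ} (hρ : 0 < ρ) :
    uGamma α ρ = ρ ^ α * ∫ s in Ioi (1 : ℝ), s ^ (α - 1) * exp (-(ρ * s)) := by
  have hsubst := integral_comp_mul_left_Ioi (fun t : ℝ => t ^ (α - 1) * exp (-t)) 1 hρ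
  rw [mul_one, smul_eq_mul] at hsubst
  have hscale : ∫ s in Ioi (1 : ℝ), (ρ * s) ^ (α - 1) * exp (-(ρ * s))
      = ρ ^ (α - 1) * ∫ s in Ioi (1 : ℝ), s ^ (α - 1) * exp (-(ρ * s)) := by
    rw [← integral_const_mul]
    refine setIntegral_congr_fun measurableSet_Ioi fun s (hs : 1 < s) => ?_
    rw [mul_rpow hρ.le (by linarith), mul_assoc]
  rw [hscale, rpow_sub_one hρ.ne'] at hsubst
  rw [uGamma]
  field_simp at hsubst ⊢
  linarith

theorem integral_pow_mul_ftg_eq {σ : ℝ} (hσ : 0 < σ) (α : ℝ) (k : ℕ) {ρ : ℝ} (hρ : 0 < ρ) :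
    ∫ x in Ioi (0 : ℝ), x ^ k * ftg α (ρ / σ) ρ x
      = (∫ x in Ioi (0 : ℝ), x ^ k * (1 + x / σ) ^ (α - 1) * exp (-(ρ * (1 + x / σ))))
        / (σ * ∫ s in Ioi (1 : ℝ), s ^ (α - 1) * exp (-(ρ * s))) := by
  have hρα : ρ ^ α ≠ 0 := (rpow_pos_of_pos hρ α).ne'
  have hint : ∀ x ∈ Ioi (0 : ℝ), x ^ k * ftg α (ρ / σ) ρ x
      = ρ ^ α / (σ * uGamma α ρ) * (x ^ k * (1 + x / σ) ^ (α - 1) * exp (-(ρ * (1 + x / σ)))) := by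
    intro x (hx : 0 < x)
    have hρx : ρ + ρ / σ * x = ρ * (1 + x / σ) := by field_simp
    rw [ftg, hρx, mul_rpow hρ.le (by positivity), rpow_sub_one hρ.ne']
    field_simp
  rw [setIntegral_congr_fun measurableSet_Ioi hint, integral_const_mul,
    uGamma_eq_rpow_mul_integral_Ioi_one α hρ, mul_left_comm σ, div_mul_cancel_left₀ hρα,
    inv_mul_eq_div]

theorem ftg_moments_tendsto_pareto_general (σ α : ℝ) (hσ : 0 < σ) (hα : α < 0)
    (k : ℕ) (hkα : (k : ℝ) < -α) :
    MeasureTheory.IntegrableOn (fun x : ℝ => x ^ k * pareto α σ x) (Set.Ioi 0) ∧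
    Filter.Tendsto (fun ρ : ℝ => ∫ x in Set.Ioi (0:ℝ), x ^ k * ftg α (ρ / σ) ρ x)
      (nhdsWithin 0 (Set.Ioi 0))
      (nhds (∫ x in Set.Ioi (0:ℝ), x ^ k * pareto α σ x)) := by
  have hpareto : (fun x : ℝ => x ^ k * pareto α σ x)
      = fun x : ℝ => -α / σ * (x ^ k * (1 + x / σ) ^ (α - 1)) := by
    ext x; rw [pareto]; ring
  have hint := integrableOn_pow_mul_one_add_div_rpow hσ hkα
  refine ⟨hpareto ▸ hint.const_mul _, ?_⟩
  have hnum := tendsto_integral_mul_exp_neg_mul (h := fun x => 1 + x / σ) hint (by fun_prop)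
    ((ae_restrict_iff' measurableSet_Ioi).mpr (.of_forall fun x (hx : 0 < x) => by positivity))
  have hden := tendsto_integral_mul_exp_neg_mul (g := fun s => s ^ (α - 1)) (h := id)
    (integrableOn_Ioi_rpow_of_lt (by linarith) zero_lt_one) measurable_id.aemeasurable
    ((ae_restrict_iff' measurableSet_Ioi).mpr (.of_forall fun s (hs : 1 < s) => (zero_lt_one.trans hs).le))
  rw [integral_Ioi_one_rpow hα] at hden
  have hlim := (hnum.div (hden.const_mul σ) (mul_ne_zero hσ.ne' (by simp [hα.ne]))).mono_left
    (nhdsWithin_mono _ Ioi_subset_Ici_self)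
  have hval : ∫ x in Ioi (0 : ℝ), x ^ k * pareto α σ x
      = (∫ x in Ioi (0 : ℝ), x ^ k * (1 + x / σ) ^ (α - 1)) / (σ * (-1 / α)) := by
    rw [hpareto, integral_const_mul]
    field_simp
  rw [hval]
  refine hlim.congr' ?_
  filter_upwards [self_mem_nhdsWithin] with ρ (hρ : 0 < ρ)
  exact (integral_pow_mul_ftg_eq hσ α k hρ).symm

theorem ftg_moments_tendsto_pareto (σ α : ℝ) (hσ : 0 < σ) (hα : α < 0)
    (k : ℕ) (hk : 0 < k) (hkα : (k : ℝ) < -α) :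
    MeasureTheory.IntegrableOn (fun x : ℝ => x ^ k * pareto α σ x) (Set.Ioi 0) ∧
    Filter.Tendsto (fun ρ : ℝ => ∫ x in Set.Ioi (0:ℝ), x ^ k * ftg α (ρ / σ) ρ x)
      (nhdsWithin 0 (Set.Ioi 0))
      (nhds (∫ x in Set.Ioi (0:ℝ), x ^ k * pareto α σ x)) :=
  ftg_moments_tendsto_pareto_general σ α hσ hα k hkα
end
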